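/- arXiv:2005.14027 — 8 statements merged into one kernel-verified Lean document; each statement's English description precedes it below -/
import Mathlib

section
/- Let φ = (1+√5)/2 be the golden mean and Λ = {φ^n : n ∈ ℤ} ∪ {−φ^n : n ∈ ℤ} ⊆ ℝ. Then for p, q ∈ Λ, one has p + q = 1 if and only if (p, q) is one of the six ordered pairs (φ², −φ), (−φ, φ²), (φ, −φ⁻¹), (−φ⁻¹, φ), (φ⁻², φ⁻¹), (φ⁻¹, φ⁻²). -/
/-!
Normalising by the larger summand, every triad reduces to one with two positive members:
`φ ^ a - φ ^ b = 1` is equivalent to `φ ^ (-a) + φ ^ (b - a) = 1`, and two negative members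
cannot sum to `1`. A positive triad `φ ^ a + φ ^ b = 1` forces `a, b < 0`; since
`φ⁻¹ + φ⁻² = 1` and `φ⁻² < φ⁻¹`, the exponents cannot both be `≤ -2`, so one of them is `-1`
and then the other is `-2`.
-/

/-- The logarithmic lattice with spacing `l`: the set `{±l^n : n ∈ ℤ} ⊆ ℝ`. -/
def logLattice (l : ℝ) : Set ℝ := {x | ∃ n : ℤ, x = l ^ n ∨ x = -(l ^ n)}

namespace Real

open scoped goldenRatio

theorem goldenRatio_zpow_add_two (n : ℤ) : φ ^ (n + 2) = φ ^ (n + 1) + φ ^ n := by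
  rw [zpow_add₀ goldenRatio_ne_zero, zpow_add_one₀ goldenRatio_ne_zero, zpow_ofNat,
    goldenRatio_sq]
  ring

theorem goldenRatio_zpow_neg_one_add_zpow_neg_two : φ ^ (-1 : ℤ) + φ ^ (-2 : ℤ) = 1 := by
  simpa using (goldenRatio_zpow_add_two (-2)).symm

theorem goldenRatio_zpow_inj {m n : ℤ} : φ ^ m = φ ^ n ↔ m = n :=
  zpow_right_inj₀ goldenRatio_pos one_lt_goldenRatio.ne'

theorem goldenRatio_zpow_add_zpow_eq_one_iff {a b : ℤ} :
    φ ^ a + φ ^ b = 1 ↔ a = -1 ∧ b = -2 ∨ a = -2 ∧ b = -1 := by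
  have hsum := goldenRatio_zpow_neg_one_add_zpow_neg_two
  constructor
  · intro h
    have ha : a < 0 := (zpow_lt_one_iff_right₀ one_lt_goldenRatio).1 <| by
      linarith [zpow_pos goldenRatio_pos b]
    have hb : b < 0 := (zpow_lt_one_iff_right₀ one_lt_goldenRatio).1 <| by
      linarith [zpow_pos goldenRatio_pos a]
    have hab : a = -1 ∨ b = -1 := by
      by_contra! hne
      have h21 : φ ^ (-2 : ℤ) < φ ^ (-1 : ℤ) :=
        zpow_lt_zpow_right₀ one_lt_goldenRatio (by norm_num)
      have := zpow_le_zpow_right₀ one_lt_goldenRatio.le (show a ≤ -2 by omega)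
      have := zpow_le_zpow_right₀ one_lt_goldenRatio.le (show b ≤ -2 by omega)
      linarith
    rcases hab with rfl | rfl
    · exact .inl ⟨rfl, goldenRatio_zpow_inj.1 (by linarith)⟩
    · exact .inr ⟨goldenRatio_zpow_inj.1 (by linarith), rfl⟩
  · rintro (⟨rfl, rfl⟩ | ⟨rfl, rfl⟩)
    · exact hsum
    · rwa [add_comm]

theorem goldenRatio_zpow_sub_zpow_eq_one_iff {a b : ℤ} :
    φ ^ a - φ ^ b = 1 ↔ a = 1 ∧ b = -1 ∨ a = 2 ∧ b = 1 := by
  have hfactor : φ ^ a - φ ^ b - 1 = φ ^ a * (1 - φ ^ (b - a) - φ ^ (-a)) := by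
    simp only [mul_sub, mul_one, ← zpow_add₀ goldenRatio_ne_zero, add_sub_cancel, add_neg_cancel,
      zpow_zero]
  have hnormalize : φ ^ a - φ ^ b = 1 ↔ φ ^ (-a) + φ ^ (b - a) = 1 := by
    rw [← sub_eq_zero, hfactor, mul_eq_zero, or_iff_right (zpow_ne_zero a goldenRatio_ne_zero)]
    constructor <;> intro h <;> linarith
  rw [hnormalize, goldenRatio_zpow_add_zpow_eq_one_iff]
  omega

end Real

open Real

/-- Classification of triads at the unity for the lattice with spacing `λ = φ`,
the golden mean: for `p, q ∈ Λ(φ)`, `p + q = 1` iff `(p,q)` is one of the six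
pairs `(φ², −φ), (−φ, φ²), (φ, −φ⁻¹), (−φ⁻¹, φ), (φ⁻², φ⁻¹), (φ⁻¹, φ⁻²)`. -/
theorem triads_at_unity_golden_mean (φ : ℝ) (hφ : φ = (1 + Real.sqrt 5) / 2)
    (p q : ℝ) (hp : p ∈ logLattice φ) (hq : q ∈ logLattice φ) :
    p + q = 1 ↔
      (p, q) = (φ ^ 2, -φ) ∨ (p, q) = (-φ, φ ^ 2) ∨
      (p, q) = (φ, -φ⁻¹) ∨ (p, q) = (-φ⁻¹, φ) ∨
      (p, q) = (φ⁻¹ ^ 2, φ⁻¹) ∨ (p, q) = (φ⁻¹, φ⁻¹ ^ 2) := by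
  obtain rfl : φ = goldenRatio := hφ
  constructor
  · obtain ⟨m, rfl | rfl⟩ := hp <;> obtain ⟨n, rfl | rfl⟩ := hq <;> intro h
    · obtain ⟨rfl, rfl⟩ | ⟨rfl, rfl⟩ := goldenRatio_zpow_add_zpow_eq_one_iff.1 h <;>
        simp only [zpow_neg, zpow_ofNat, pow_one, inv_pow, true_or, or_true]
    · obtain ⟨rfl, rfl⟩ | ⟨rfl, rfl⟩ :=
          goldenRatio_zpow_sub_zpow_eq_one_iff.1 (by rwa [sub_eq_add_neg]) <;>
        simp only [zpow_neg, zpow_ofNat, pow_one, inv_pow, true_or, or_true]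
    · obtain ⟨rfl, rfl⟩ | ⟨rfl, rfl⟩ :=
          goldenRatio_zpow_sub_zpow_eq_one_iff.1 (by rwa [sub_eq_neg_add]) <;>
        simp only [zpow_neg, zpow_ofNat, pow_one, inv_pow, true_or, or_true]
    · linarith [zpow_pos goldenRatio_pos m, zpow_pos goldenRatio_pos n]
  · rintro (h | h | h | h | h | h) <;> obtain ⟨rfl, rfl⟩ := Prod.mk.inj h <;>
      grind [goldenRatio_sq]
end

section
/- Let σ be the unique real number greater than 1 satisfying σ³ − σ − 1 = 0 (the plastic number), and let Λ = {σ^n : n ∈ ℤ} ∪ {−σ^n : n ∈ ℤ} ⊆ ℝ. Then for p, q ∈ Λ, one has p + q = 1 if and only if (p, q) is one of the twelve ordered pairs (σ³, −σ), (−σ, σ³), (σ², −σ⁻¹), (−σ⁻¹, σ²), (σ⁻³, σ⁻²), (σ⁻², σ⁻³), (σ⁵, −σ⁴), (−σ⁴, σ⁵), (σ, −σ⁻⁴), (−σ⁻⁴, σ), (σ⁻⁵, σ⁻¹), (σ⁻¹, σ⁻⁵). -/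
/-!
Write `p = ±σ ^ m` and `q = ±σ ^ n`; two negative terms cannot sum to `1`, and dividing by the
power of `σ` carried by the subtracted term turns every other case into `σ ^ d = σ ^ k + 1`.
From `σ³ = σ + 1` and `σ⁵ = σ⁴ + 1` every power of `σ` satisfies `σ ^ (j + 3) = σ ^ (j + 1) + σ ^ j`
and `σ ^ (j + 5) = σ ^ (j + 4) + σ ^ j`. These give the four solutions
`(d, k) = (1, -4), (2, -1), (3, 1), (5, 4)`, and they place `σ ^ d - 1` strictly between two
consecutive powers of `σ` when `d = 4` or `d ≥ 6`.
-/

section Field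

variable {K : Type*} [Field K] {σ : K}

theorem zpow_add_zpow_eq_one_iff (hσ : σ ≠ 0) {m n : ℤ} :
    σ ^ m + σ ^ n = 1 ↔ σ ^ (-n) = σ ^ (m - n) + 1 := by
  have := zpow_ne_zero n hσ
  rw [zpow_neg, zpow_sub₀ hσ]
  field_simp
  exact eq_comm

theorem zpow_sub_zpow_eq_one_iff (hσ : σ ≠ 0) {m n : ℤ} :
    σ ^ m - σ ^ n = 1 ↔ σ ^ (m - n) = σ ^ (-n) + 1 := by
  have := zpow_ne_zero n hσ
  rw [zpow_neg, zpow_sub₀ hσ]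
  field_simp
  exact sub_eq_iff_eq_add

theorem plastic_ne_zero (hσ : σ ^ 3 - σ - 1 = 0) : σ ≠ 0 := by
  rintro rfl
  norm_num at hσ

theorem plastic_zpow_add_three (hσ : σ ^ 3 - σ - 1 = 0) (j : ℤ) :
    σ ^ (j + 3) = σ ^ (j + 1) + σ ^ j := by
  simp only [zpow_add₀ (plastic_ne_zero hσ), zpow_ofNat]
  linear_combination σ ^ j * hσ

theorem plastic_zpow_add_five (hσ : σ ^ 3 - σ - 1 = 0) (j : ℤ) :
    σ ^ (j + 5) = σ ^ (j + 4) + σ ^ j := by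
  simp only [zpow_add₀ (plastic_ne_zero hσ), zpow_ofNat]
  linear_combination σ ^ j * (σ ^ 2 - σ + 1) * hσ

end Field

section OrderedField

variable {K : Type*} [Field K] [LinearOrder K] [IsStrictOrderedRing K] {σ : K}

theorem plastic_zpow_eq_zpow_add_one_iff (hσ1 : 1 < σ) (hσ : σ ^ 3 - σ - 1 = 0)
    {d k : ℤ} :
    σ ^ d = σ ^ k + 1 ↔
      (d, k) = (1, -4) ∨ (d, k) = (2, -1) ∨ (d, k) = (3, 1) ∨ (d, k) = (5, 4) := by
  have three := plastic_zpow_add_three hσ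
  have five := plastic_zpow_add_five hσ
  have e1 : σ ^ (1 : ℤ) = σ ^ (-4 : ℤ) + 1 := by simpa [add_comm] using five (-4)
  have e2 : σ ^ (2 : ℤ) = σ ^ (-1 : ℤ) + 1 := by simpa [add_comm] using three (-1)
  have e3 : σ ^ (3 : ℤ) = σ ^ (1 : ℤ) + 1 := by simpa [add_comm] using three 0
  have e5 : σ ^ (5 : ℤ) = σ ^ (4 : ℤ) + 1 := by simpa [add_comm] using five 0
  constructor
  · intro h
    have lt_iff {m n : ℤ} : σ ^ m < σ ^ n ↔ m < n := zpow_lt_zpow_iff_right₀ hσ1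
    have one_lt {n : ℤ} : 0 < n → 1 < σ ^ n := one_lt_zpow₀ hσ1
    have pos (n : ℤ) : 0 < σ ^ n := zpow_pos (by linarith) n
    have k_eq {k₀ : ℤ} (h₀ : σ ^ d = σ ^ k₀ + 1) : k = k₀ :=
      (zpow_right_inj₀ (by linarith) hσ1.ne').1 (by linarith)
    have hd : 0 < d := (one_lt_zpow_iff_right₀ hσ1).1 (by linarith [pos k])
    obtain rfl | rfl | rfl | rfl | rfl | hd6 : d = 1 ∨ d = 2 ∨ d = 3 ∨ d = 4 ∨ d = 5 ∨ 6 ≤ d := by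
      omega
    · simp [k_eq e1]
    · simp [k_eq e2]
    · simp [k_eq e3]
    · have e4 : σ ^ (4 : ℤ) = σ ^ (2 : ℤ) + σ := by simpa using three 1
      have e4' : σ ^ (4 : ℤ) = σ ^ (3 : ℤ) + σ⁻¹ := by simpa [add_comm] using five (-1)
      have := lt_iff.1 (show σ ^ (2 : ℤ) < σ ^ k by linarith)
      have := lt_iff.1 (show σ ^ k < σ ^ (3 : ℤ) by linarith [inv_lt_one_of_one_lt₀ hσ1])
      omega
    · simp [k_eq e5]
    · have ed := five (d - 5)
      rw [sub_add_cancel, show d - 5 + 4 = d - 1 by ring] at ed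
      have := lt_iff.1 (show σ ^ (d - 1) < σ ^ k by linarith [@one_lt (d - 5) (by omega)])
      have := lt_iff.1 (show σ ^ k < σ ^ d by linarith)
      omega
  · rintro (h | h | h | h) <;> obtain ⟨rfl, rfl⟩ := Prod.mk.inj h <;> assumption

theorem plastic_zpow_add_zpow_eq_one_iff (hσ1 : 1 < σ) (hσ : σ ^ 3 - σ - 1 = 0) {m n : ℤ} :
    σ ^ m + σ ^ n = 1 ↔
      (m, n) = (-2, -3) ∨ (m, n) = (-3, -2) ∨ (m, n) = (-1, -5) ∨ (m, n) = (-5, -1) := by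
  rw [zpow_add_zpow_eq_one_iff (plastic_ne_zero hσ), plastic_zpow_eq_zpow_add_one_iff hσ1 hσ]
  simp only [Prod.mk.injEq]
  omega

theorem plastic_zpow_sub_zpow_eq_one_iff (hσ1 : 1 < σ) (hσ : σ ^ 3 - σ - 1 = 0) {m n : ℤ} :
    σ ^ m - σ ^ n = 1 ↔
      (m, n) = (3, 1) ∨ (m, n) = (2, -1) ∨ (m, n) = (5, 4) ∨ (m, n) = (1, -4) := by
  rw [zpow_sub_zpow_eq_one_iff (plastic_ne_zero hσ), plastic_zpow_eq_zpow_add_one_iff hσ1 hσ]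
  simp only [Prod.mk.injEq]
  omega

end OrderedField

/-- Classification of triads at the unity for the lattice with spacing `λ = σ`,
the plastic number (the unique real root `> 1` of `x³ − x − 1 = 0`): for
`p, q ∈ Λ(σ)`, `p + q = 1` iff `(p,q)` is one of the twelve listed pairs. -/
theorem triads_at_unity_plastic (σ : ℝ) (hσ1 : 1 < σ) (hσ : σ ^ 3 - σ - 1 = 0)
    (p q : ℝ) (hp : p ∈ logLattice σ) (hq : q ∈ logLattice σ) :
    p + q = 1 ↔
      (p, q) = (σ ^ 3, -σ) ∨ (p, q) = (-σ, σ ^ 3) ∨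
      (p, q) = (σ ^ 2, -σ⁻¹) ∨ (p, q) = (-σ⁻¹, σ ^ 2) ∨
      (p, q) = (σ⁻¹ ^ 3, σ⁻¹ ^ 2) ∨ (p, q) = (σ⁻¹ ^ 2, σ⁻¹ ^ 3) ∨
      (p, q) = (σ ^ 5, -σ ^ 4) ∨ (p, q) = (-σ ^ 4, σ ^ 5) ∨
      (p, q) = (σ, -σ⁻¹ ^ 4) ∨ (p, q) = (-σ⁻¹ ^ 4, σ) ∨
      (p, q) = (σ⁻¹ ^ 5, σ⁻¹) ∨ (p, q) = (σ⁻¹, σ⁻¹ ^ 5) := by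
  refine ⟨fun h ↦ ?_, fun h ↦ ?_⟩
  · have pos (n : ℤ) : 0 < σ ^ n := zpow_pos (by linarith) n
    obtain ⟨m, rfl | rfl⟩ := hp <;> obtain ⟨n, rfl | rfl⟩ := hq
    · rcases (plastic_zpow_add_zpow_eq_one_iff hσ1 hσ).1 h with h | h | h | h <;> cases h <;>
        simp [zpow_neg, inv_pow]
    · rcases (plastic_zpow_sub_zpow_eq_one_iff hσ1 hσ (m := m) (n := n)).1 (by linarith)
        with h | h | h | h <;> cases h <;> simp [zpow_neg, inv_pow]
    · rcases (plastic_zpow_sub_zpow_eq_one_iff hσ1 hσ (m := n) (n := m)).1 (by linarith)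
        with h | h | h | h <;> cases h <;> simp [zpow_neg, inv_pow]
    · linarith [pos m, pos n]
  · rcases h with h | h | h | h | h | h | h | h | h | h | h | h <;>
      obtain ⟨rfl, rfl⟩ := Prod.mk.inj h <;> grind
end

section
/- Let λ ≥ 1.05 be a real number and Λ = Λ(λ). Call two points x, y ∈ Λ directly interacting if there exist k, p, q ∈ Λ with k = p + q such that both x and y belong to {k, p, q}; call Λ nondegenerate if every two points of Λ are joined by a finite chain of directly interacting points (i.e., the reflexive-transitive closure of the direct-interaction relation connects any two lattice points). Then Λ is nondegenerate if and only if one of the following holds: (i) λ = 2; (ii) λ = σ, the plastic number; (iii) λ^b − λ^a = 1 for some mutually prime integers a, b with 0 ≤ a < b ≤ 62 and (a, b) ∉ {(1,3), (4,5)}. -/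
/-- Two points `x, y` directly interact on the lattice `Λ(l)` if there is a triad
`k = p + q` of lattice points such that both `x` and `y` belong to `{k, p, q}`. -/
def DirectlyInteract (l : ℝ) (x y : ℝ) : Prop :=
  ∃ k p q : ℝ, k ∈ logLattice l ∧ p ∈ logLattice l ∧ q ∈ logLattice l ∧
    k = p + q ∧ x ∈ ({k, p, q} : Set ℝ) ∧ y ∈ ({k, p, q} : Set ℝ)

/-- The lattice `Λ(l)` is nondegenerate if every two lattice points are joined by a
finite chain of directly interacting points (reflexive-transitive closure). -/
def Nondegenerate (l : ℝ) : Prop :=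
  ∀ x ∈ logLattice l, ∀ y ∈ logLattice l, Relation.ReflTransGen (DirectlyInteract l) x y

/-!
If `λ^b - λ^a = 1` with `gcd(a, b) = 1`, the triads `λ^{n+b} = λ^{n+a} + λ^n` let one step by `a`
and by `b` in the exponent, hence by `1` (Bézout), inside the positive and inside the negative
half of `Λ(λ)`, and one sign-changing triad links the halves. Conversely, every triad has the
shape `λ^{c₁} = λ^{c₂} + λ^{c₃}` up to signs, so it yields a solution `λ^B - λ^A = 1`, and its
exponents are congruent modulo `gcd(A, B)`. Since `λ ≥ 1.05` forces `B ≤ 62`, a table of the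
roots of the finitely many non-coprime trinomials shows that roots with different gcds already
differ in the seventh decimal. So if no solution is coprime, all solutions share one gcd `g ≥ 2`,
exponents are constant modulo `g` along chains, and `1` is not linked to `λ`. The coprime pairs
`(1, 3)` and `(4, 5)` both give the plastic number, since
`x^5 - x^4 - 1 = (x^3 - x - 1)(x^2 - x + 1)`.
-/

open Relation

theorem Relation.reflTransGen_of_isCoprime {α : Type*} {r : α → α → Prop} [Std.Symm r]
    (f : ℤ → α) {a b : ℤ} (hab : IsCoprime a b) (ha : ∀ n, r (f n) (f (n + a)))
    (hb : ∀ n, r (f n) (f (n + b))) (m n : ℤ) : ReflTransGen r (f m) (f n) := by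
  let shifts : AddSubgroup ℤ :=
    { carrier := {k | ∀ n, ReflTransGen r (f n) (f (n + k))}
      zero_mem' := fun n => by rw [add_zero]
      add_mem' := fun hj hk n => by rw [← add_assoc]; exact (hj n).trans (hk _)
      neg_mem' := fun {k} hk n => by simpa using symm (hk (n + -k)) }
  obtain ⟨u, v, huv⟩ := hab
  have h1 : (1 : ℤ) ∈ shifts := by
    rw [← huv]
    exact shifts.add_mem (shifts.zsmul_mem (fun n => .single (ha n)) u)
      (shifts.zsmul_mem (fun n => .single (hb n)) v)
  simpa using shifts.zsmul_mem h1 (n - m) m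

theorem abs_eq_add_abs_of_eq_add {α : Type*} [AddCommGroup α] [LinearOrder α]
    [IsOrderedAddMonoid α] {k p q : α} (h : k = p + q) :
    |k| = |p| + |q| ∨ |p| = |k| + |q| ∨ |q| = |k| + |p| := by
  subst h
  rcases abs_cases p with ⟨hp, _⟩ | ⟨hp, _⟩ <;> rcases abs_cases q with ⟨hq, _⟩ | ⟨hq, _⟩ <;>
    rcases abs_cases (p + q) with ⟨hk, _⟩ | ⟨hk, _⟩ <;> rw [hp, hq, hk] <;>
    first
    | (left; abel1) | (right; left; abel1) | (right; right; abel1)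
    | exact absurd (add_nonneg ‹0 ≤ p› ‹0 ≤ q›) (not_le.2 ‹p + q < 0›)
    | exact absurd (add_neg ‹p < 0› ‹q < 0›) (not_lt.2 ‹0 ≤ p + q›)

section PowSubPow

variable {A B : ℕ}

theorem strictMonoOn_pow_sub_pow {R : Type*} [CommRing R] [LinearOrder R]
    [IsStrictOrderedRing R] (hAB : A < B) :
    StrictMonoOn (fun x : R => x ^ B - x ^ A) (Set.Ici 1) := by
  intro x (hx : 1 ≤ x) y (hy : 1 ≤ y) hxy
  have split (z : R) : z ^ B - z ^ A = z ^ A * (z ^ (B - A) - 1) := by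
    rw [mul_sub, ← pow_add, Nat.add_sub_cancel' hAB.le, mul_one]
  simp only [split]
  have hx₀ : 0 ≤ x := zero_le_one.trans hx
  exact mul_lt_mul' (pow_le_pow_left₀ hx₀ hxy.le A)
    (sub_lt_sub_right (pow_lt_pow_left₀ hxy hx₀ (by omega)) 1) (sub_nonneg.2 (one_le_pow₀ hx))
    (pow_pos (zero_lt_one.trans_le hy) A)

variable {K : Type*} [Field K] [LinearOrder K] [IsStrictOrderedRing K] {x d : K}

theorem div_pow_sub_div_pow (x : K) (hd : d ≠ 0) (hAB : A ≤ B) :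
    (x / d) ^ B - (x / d) ^ A = (x ^ B - x ^ A * d ^ (B - A)) / d ^ B := by
  have hB : d ^ B = d ^ A * d ^ (B - A) := by rw [← pow_add, Nat.add_sub_cancel' hAB]
  rw [div_pow, div_pow, hB]
  field_simp

theorem div_pow_sub_div_pow_lt_one_iff (hd : 0 < d) (hAB : A ≤ B) :
    (x / d) ^ B - (x / d) ^ A < 1 ↔ x ^ B < d ^ B + x ^ A * d ^ (B - A) := by
  rw [div_pow_sub_div_pow x hd.ne' hAB, div_lt_one (pow_pos hd B), sub_lt_iff_lt_add]

theorem one_lt_div_pow_sub_div_pow_iff (hd : 0 < d) (hAB : A ≤ B) :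
    1 < (x / d) ^ B - (x / d) ^ A ↔ d ^ B + x ^ A * d ^ (B - A) < x ^ B := by
  rw [div_pow_sub_div_pow x hd.ne' hAB, one_lt_div (pow_pos hd B), lt_sub_iff_add_lt]

end PowSubPow

theorem eq_of_cube_sub_self_sub_one_eq_zero {x y : ℝ} (hx : 1 < x) (hy : 1 < y)
    (hx₃ : x ^ 3 - x - 1 = 0) (hy₃ : y ^ 3 - y - 1 = 0) : x = y := by
  have h : (x - y) * (x ^ 2 + x * y + y ^ 2 - 1) = 0 := by linear_combination hx₃ - hy₃
  have hpos : 0 < x ^ 2 + x * y + y ^ 2 - 1 := by nlinarith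
  linarith [(mul_eq_zero.1 h).resolve_right hpos.ne']

theorem cube_sub_self_sub_one_eq_zero_of_pow_five {x : ℝ} (h : x ^ 5 - x ^ 4 = 1) :
    x ^ 3 - x - 1 = 0 := by
  have hfac : (x ^ 3 - x - 1) * (x ^ 2 - x + 1) = 0 := by linear_combination h
  exact (mul_eq_zero.1 hfac).resolve_right (by nlinarith [sq_nonneg (x - 1)])

section LogLattice

variable {l : ℝ}

theorem zpow_mem_logLattice (l : ℝ) (n : ℤ) : l ^ n ∈ logLattice l := ⟨n, Or.inl rfl⟩

theorem neg_zpow_mem_logLattice (l : ℝ) (n : ℤ) : -l ^ n ∈ logLattice l := ⟨n, Or.inr rfl⟩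

theorem exists_abs_eq_zpow_of_mem_logLattice (hl : 0 ≤ l) {x : ℝ} (hx : x ∈ logLattice l) :
    ∃ n : ℤ, |x| = l ^ n := by
  obtain ⟨n, hn⟩ := hx
  exact ⟨n, (abs_eq (zpow_nonneg hl n)).2 hn⟩

instance : Std.Symm (DirectlyInteract l) where
  symm _ _ := fun ⟨k, p, q, hk, hp, hq, h, hx, hy⟩ => ⟨k, p, q, hk, hp, hq, h, hy, hx⟩

theorem DirectlyInteract.left_mem {x y : ℝ} (h : DirectlyInteract l x y) : x ∈ logLattice l := by
  obtain ⟨k, p, q, hk, hp, hq, -, hx, -⟩ := h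
  rcases hx with rfl | rfl | rfl <;> assumption

theorem nondegenerate_of_pow_sub_pow_eq_one (hl : l ≠ 0) {a b : ℕ} (hab : Nat.Coprime a b)
    (h : l ^ b - l ^ a = 1) : Nondegenerate l := by
  have triad (n : ℤ) : l ^ (n + b) = l ^ (n + a) + l ^ n := by
    rw [zpow_add₀ hl, zpow_add₀ hl, zpow_natCast, zpow_natCast]
    linear_combination l ^ n * h
  have hco : IsCoprime (a : ℤ) b := Nat.isCoprime_iff_coprime.2 hab
  have P := zpow_mem_logLattice l
  have N := neg_zpow_mem_logLattice l
  have pos : ∀ m n : ℤ, ReflTransGen (DirectlyInteract l) (l ^ m) (l ^ n) :=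
    reflTransGen_of_isCoprime (fun n => l ^ n) hco
      (fun n => ⟨_, _, _, P _, P _, P n, triad n, by simp, by simp⟩)
      (fun n => ⟨_, _, _, P _, P _, P n, triad n, by simp, by simp⟩)
  have neg : ∀ m n : ℤ, ReflTransGen (DirectlyInteract l) (-l ^ m) (-l ^ n) :=
    reflTransGen_of_isCoprime (fun n => -l ^ n) hco
      (fun n => ⟨_, _, -l ^ n, N (n + b), N (n + a), N n,
        by rw [triad]; ring, by simp, by simp⟩)
      (fun n => ⟨_, _, -l ^ n, N (n + b), N (n + a), N n,
        by rw [triad]; ring, by simp, by simp⟩)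
  have cross (m n : ℤ) : ReflTransGen (DirectlyInteract l) (-l ^ m) (l ^ n) :=
    .head ⟨l ^ (m + a), l ^ (m + b), -l ^ m, P _, P _, N m,
      by rw [triad]; ring, by simp, by simp⟩ (pos (m + a) n)
  rintro x ⟨m, rfl | rfl⟩ y ⟨n, rfl | rfl⟩
  · exact pos m n
  · exact symm (cross n m)
  · exact cross m n
  · exact neg m n

theorem exists_pow_sub_pow_eq_one_of_zpow_eq_add (hl : 1 < l) {c₁ c₂ c₃ : ℤ}
    (h : l ^ c₁ = l ^ c₂ + l ^ c₃) :
    ∃ A B : ℕ, A < B ∧ l ^ B - l ^ A = 1 ∧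
      c₂ ≡ c₁ [ZMOD Nat.gcd A B] ∧ c₃ ≡ c₁ [ZMOD Nat.gcd A B] := by
  wlog hc : c₃ ≤ c₂ generalizing c₂ c₃
  · obtain ⟨A, B, hAB, hsol, h₃, h₂⟩ := this (c₂ := c₃) (c₃ := c₂) (by rw [h, add_comm]) (by omega)
    exact ⟨A, B, hAB, hsol, h₂, h₃⟩
  have hl₀ : 0 < l := by linarith
  have h₂₁ : c₂ < c₁ := (zpow_lt_zpow_iff_right₀ hl).1 (by linarith [zpow_pos hl₀ c₃])
  obtain ⟨A, hA⟩ := Int.eq_ofNat_of_zero_le (sub_nonneg.2 hc)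
  obtain ⟨B, hB⟩ := Int.eq_ofNat_of_zero_le (by omega : 0 ≤ c₁ - c₃)
  have hgA : (Nat.gcd A B : ℤ) ∣ A := Int.natCast_dvd_natCast.2 (Nat.gcd_dvd_left A B)
  have hgB : (Nat.gcd A B : ℤ) ∣ B := Int.natCast_dvd_natCast.2 (Nat.gcd_dvd_right A B)
  refine ⟨A, B, by omega, ?_, Int.modEq_iff_dvd.2 ?_, Int.modEq_iff_dvd.2 ?_⟩
  · rw [← zpow_natCast, ← zpow_natCast, ← hA, ← hB, zpow_sub₀ hl₀.ne', zpow_sub₀ hl₀.ne', h,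
      add_div, div_self (zpow_pos hl₀ c₃).ne']
    ring
  · rw [show c₁ - c₂ = (B : ℤ) - A by omega]
    exact dvd_sub hgB hgA
  · rwa [hB]

variable (hl : 1 < l) {g : ℕ} (hg : ∀ A B : ℕ, A < B → l ^ B - l ^ A = 1 → g ∣ Nat.gcd A B)
include hl hg

theorem exists_modEq_of_eq_add {k p q : ℝ} (h : k = p + q) {i j j' : ℤ} (hk : |k| = l ^ i)
    (hp : |p| = l ^ j) (hq : |q| = l ^ j') :
    ∃ c, i ≡ c [ZMOD g] ∧ j ≡ c [ZMOD g] ∧ j' ≡ c [ZMOD g] := by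
  have modEq {c₁ c₂ c₃ : ℤ} (h : l ^ c₁ = l ^ c₂ + l ^ c₃) :
      c₂ ≡ c₁ [ZMOD g] ∧ c₃ ≡ c₁ [ZMOD g] := by
    obtain ⟨A, B, hAB, hsol, h₂, h₃⟩ := exists_pow_sub_pow_eq_one_of_zpow_eq_add hl h
    have hdvd := Int.natCast_dvd_natCast.2 (hg A B hAB hsol)
    exact ⟨h₂.of_dvd hdvd, h₃.of_dvd hdvd⟩
  rcases abs_eq_add_abs_of_eq_add h with h | h | h <;> rw [hk, hp, hq] at h
  · exact ⟨i, .refl i, modEq h⟩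
  · obtain ⟨hi, hj'⟩ := modEq h
    exact ⟨j, hi, .refl j, hj'⟩
  · obtain ⟨hi, hj⟩ := modEq h
    exact ⟨j', hi, hj, .refl j'⟩

theorem DirectlyInteract.modEq {x y : ℝ} (h : DirectlyInteract l x y) {m n : ℤ}
    (hx : |x| = l ^ m) (hy : |y| = l ^ n) : m ≡ n [ZMOD g] := by
  have hl₀ : 0 < l := by linarith
  obtain ⟨k, p, q, hk, hp, hq, hsum, hxk, hyk⟩ := h
  obtain ⟨i, hi⟩ := exists_abs_eq_zpow_of_mem_logLattice hl₀.le hk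
  obtain ⟨j, hj⟩ := exists_abs_eq_zpow_of_mem_logLattice hl₀.le hp
  obtain ⟨j', hj'⟩ := exists_abs_eq_zpow_of_mem_logLattice hl₀.le hq
  obtain ⟨c, hic, hjc, hj'c⟩ := exists_modEq_of_eq_add hl hg hsum hi hj hj'
  have hc {z : ℝ} (hz : z ∈ ({k, p, q} : Set ℝ)) {e : ℤ} (he : |z| = l ^ e) :
      e ≡ c [ZMOD g] := by
    rcases hz with rfl | rfl | rfl
    · rwa [(zpow_right_inj₀ hl₀ hl.ne').1 (he.symm.trans hi)]
    · rwa [(zpow_right_inj₀ hl₀ hl.ne').1 (he.symm.trans hj)]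
    · rwa [(zpow_right_inj₀ hl₀ hl.ne').1 (he.symm.trans hj')]
  exact (hc hxk hx).trans (hc hyk hy).symm

theorem modEq_of_reflTransGen {x y : ℝ} (h : ReflTransGen (DirectlyInteract l) x y) {m n : ℤ}
    (hx : |x| = l ^ m) (hy : |y| = l ^ n) : m ≡ n [ZMOD g] := by
  induction h generalizing n with
  | refl => rw [(zpow_right_inj₀ (by linarith) hl.ne').1 (hx.symm.trans hy)]
  | tail _ hbc ih =>
    obtain ⟨e, he⟩ := exists_abs_eq_zpow_of_mem_logLattice (by linarith) hbc.left_mem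
    exact (ih he).trans (hbc.modEq hl hg he hy)

theorem not_nondegenerate_of_dvd_gcd (hg1 : g ≠ 1) : ¬Nondegenerate l := fun h => by
  have hl₀ : 0 < l := by linarith
  have h01 := modEq_of_reflTransGen hl hg (h 1 (zpow_mem_logLattice l 0) l
    (by simpa using zpow_mem_logLattice l 1)) (m := 0) (n := 1)
    (by simp) (by simp [abs_of_pos hl₀])
  exact hg1 (Nat.dvd_one.1 (Int.natCast_dvd_natCast.1 (by simpa using Int.modEq_iff_dvd.1 h01)))

end LogLattice

/-- `(A, B, m)` with `m = ⌊10^7 λ⌋` for the root `λ > 1` of `x^B - x^A = 1`, listed for every pair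
`A < B ≤ 62` with `gcd A B ≥ 2` and `λ ≥ 1.05`. -/
def rootTable : List (ℕ × ℕ × ℕ) := [
(0, 2, 14142135),
(0, 3, 12599210),
(0, 4, 11892071),
(2, 4, 12720196),
(0, 5, 11486983),
(0, 6, 11224620),
(2, 6, 11509639),
(3, 6, 11739849),
(4, 6, 12106077),
(0, 7, 11040895),
(0, 8, 10905077),
(2, 8, 11048728),
(4, 8, 11278384),
(6, 8, 11748521),
(0, 9, 10800597),
(3, 9, 10982666),
(6, 9, 11358883),
(0, 10, 10717734),
(2, 10, 10804184),
(4, 10, 10926386),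
(5, 10, 11010258),
(6, 10, 11119827),
(8, 10, 11509639),
(0, 11, 10650410),
(0, 12, 10594630),
(2, 12, 10652343),
(3, 12, 10687469),
(4, 12, 10728298),
(6, 12, 10835058),
(8, 12, 11002762),
(9, 12, 11134109),
(10, 12, 11336661),
(0, 13, 10547660),
(0, 14, 10507566),
(2, 14, 10548818),
(4, 14, 10600626),
(6, 14, 10668560),
(7, 14, 10711625),
(8, 14, 10763604),
(10, 14, 10911978),
(12, 14, 11204565),
(3, 15, 10529182),
(5, 15, 10578514),
(6, 15, 10608427),
(9, 15, 10733269),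
(10, 15, 10794471),
(12, 15, 10982666),
(4, 16, 10511293),
(6, 16, 10558398),
(8, 16, 10619974),
(10, 16, 10705787),
(12, 16, 10839059),
(14, 16, 11099795),
(8, 18, 10523079),
(9, 18, 10549232),
(10, 18, 10579473),
(12, 18, 10657806),
(14, 18, 10778924),
(15, 18, 10872350),
(16, 18, 11014307),
(12, 20, 10545059),
(14, 20, 10617191),
(15, 20, 10665796),
(16, 20, 10728298),
(18, 20, 10942995),
(12, 21, 10502801),
(14, 21, 10561248),
(15, 21, 10599100),
(18, 21, 10787728),
(14, 22, 10515361),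
(16, 22, 10582262),
(18, 22, 10684968),
(20, 22, 10882446),
(18, 24, 10551828),
(20, 24, 10647376),
(21, 24, 10720375),
(22, 24, 10830285),
(20, 25, 10578514),
(20, 26, 10525019),
(22, 26, 10614388),
(24, 26, 10784803),
(21, 27, 10512764),
(24, 27, 10665260),
(22, 28, 10501184),
(24, 28, 10585162),
(26, 28, 10744736),
(25, 30, 10514632),
(26, 30, 10559051),
(27, 30, 10619175),
(28, 30, 10709127),
(28, 32, 10535556),
(30, 32, 10677237),
(30, 33, 10579967),
(30, 34, 10514281),
(32, 34, 10648485),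
(33, 36, 10546133),
(34, 36, 10622409),
(36, 38, 10598635),
(36, 39, 10516586),
(38, 40, 10576857),
(40, 42, 10556821),
(42, 44, 10538318),
(44, 46, 10521170),
(46, 48, 10505226)]

theorem rootTable_covers : ∀ B < 63, ∀ A < B, 2 ≤ Nat.gcd A B →
    100 ^ B + 105 ^ A * 100 ^ (B - A) < 105 ^ B ∨ ∃ e ∈ rootTable, e.1 = A ∧ e.2.1 = B := by
  decide +kernel

theorem rootTable_bounds : ∀ e ∈ rootTable, e.1 < e.2.1 ∧ 10 ^ 7 ≤ e.2.2 ∧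
    e.2.2 ^ e.2.1 < (10 ^ 7) ^ e.2.1 + e.2.2 ^ e.1 * (10 ^ 7) ^ (e.2.1 - e.1) ∧
    (10 ^ 7) ^ e.2.1 + (e.2.2 + 1) ^ e.1 * (10 ^ 7) ^ (e.2.1 - e.1) < (e.2.2 + 1) ^ e.2.1 := by
  decide +kernel

theorem rootTable_gcd_eq : ∀ e ∈ rootTable, ∀ e' ∈ rootTable,
    e.2.2 = e'.2.2 → Nat.gcd e.1 e.2.1 = Nat.gcd e'.1 e'.2.1 := by
  decide +kernel

section Numerics

variable {l : ℝ} {A B : ℕ}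

theorem le_62_of_pow_sub_pow_eq_one (hl : 1.05 ≤ l) (hAB : A < B) (h : l ^ B - l ^ A = 1) :
    B ≤ 62 := by
  have hl₁ : 1 < l := by linarith
  have hgap : l ^ A * (l - 1) ≤ 1 := calc
    l ^ A * (l - 1) ≤ l ^ A * (l ^ (B - A) - 1) := by
      gcongr
      exact le_self_pow₀ hl₁.le (by omega)
    _ = 1 := by rw [mul_sub, ← pow_add, Nat.add_sub_cancel' hAB.le, mul_one, h]
  have hB : l ^ B ≤ 21 := by nlinarith [pow_pos (zero_lt_one.trans hl₁) A]
  have h63 : l ^ B < l ^ 63 := hB.trans_lt <| calc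
    (21 : ℝ) < 1.05 ^ 63 := by norm_num
    _ ≤ l ^ 63 := pow_le_pow_left₀ (by norm_num) hl 63
  exact Nat.lt_succ_iff.1 ((pow_lt_pow_iff_right₀ hl₁).1 h63)

theorem exists_mem_rootTable (hl : 1.05 ≤ l) (hAB : A < B) (h : l ^ B - l ^ A = 1)
    (hcop : ¬Nat.Coprime A B) : ∃ m, (A, B, m) ∈ rootTable := by
  have hgcd : 2 ≤ Nat.gcd A B := by
    have := Nat.gcd_pos_of_pos_right A (by omega : 0 < B)
    unfold Nat.Coprime at hcop
    omega
  have hB : B < 63 := Nat.lt_succ_of_le (le_62_of_pow_sub_pow_eq_one hl hAB h)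
  obtain hlt | ⟨⟨_, _, m⟩, hm, rfl, rfl⟩ := rootTable_covers B hB A hAB hgcd
  · exfalso
    have h105 : 1 < ((105 : ℝ) / 100) ^ B - ((105 : ℝ) / 100) ^ A :=
      (one_lt_div_pow_sub_div_pow_iff (by norm_num) hAB.le).2 (by exact_mod_cast hlt)
    have hle : ((105 : ℝ) / 100) ^ B - ((105 : ℝ) / 100) ^ A ≤ l ^ B - l ^ A :=
      (strictMonoOn_pow_sub_pow hAB).monotoneOn (by norm_num) (Set.mem_Ici.2 (by linarith))
        (by linarith)
    linarith
  · exact ⟨m, hm⟩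

theorem floor_eq_of_mem_rootTable (hl : 1 ≤ l) {m : ℕ} (hm : (A, B, m) ∈ rootTable)
    (h : l ^ B - l ^ A = 1) : ⌊l * 10 ^ 7⌋₊ = m := by
  obtain ⟨hAB, hm₇, hlo, hhi⟩ := rootTable_bounds _ hm
  have mono := strictMonoOn_pow_sub_pow (R := ℝ) hAB
  have hd : (0 : ℝ) < 10 ^ 7 := by norm_num
  have hm₁ : (1 : ℝ) ≤ m / 10 ^ 7 := by
    rw [one_le_div hd]; exact_mod_cast hm₇
  have hlo' : (m / 10 ^ 7 : ℝ) < l := by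
    refine (mono.lt_iff_lt hm₁ hl).1 ?_
    rw [h]
    exact (div_pow_sub_div_pow_lt_one_iff hd hAB.le).2 (by exact_mod_cast hlo)
  have hhi' : l < (m + 1 : ℝ) / 10 ^ 7 := by
    refine (mono.lt_iff_lt hl (hm₁.trans (by gcongr; linarith))).1 ?_
    rw [h]
    exact (one_lt_div_pow_sub_div_pow_iff hd hAB.le).2 (by exact_mod_cast hhi)
  rw [Nat.floor_eq_iff (by positivity)]
  constructor
  · rw [← div_le_iff₀ hd]; exact hlo'.le
  · rw [← lt_div_iff₀ hd]; exact hhi'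

theorem gcd_eq_of_pow_sub_pow_eq_one (hl : 1.05 ≤ l) {A' B' : ℕ}
    (hAB : A < B) (h : l ^ B - l ^ A = 1) (hcop : ¬Nat.Coprime A B)
    (hAB' : A' < B') (h' : l ^ B' - l ^ A' = 1) (hcop' : ¬Nat.Coprime A' B') :
    Nat.gcd A B = Nat.gcd A' B' := by
  have hl₁ : (1 : ℝ) ≤ l := by linarith
  obtain ⟨m, hm⟩ := exists_mem_rootTable hl hAB h hcop
  obtain ⟨m', hm'⟩ := exists_mem_rootTable hl hAB' h' hcop'
  exact rootTable_gcd_eq _ hm _ hm'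
    ((floor_eq_of_mem_rootTable hl₁ hm h).symm.trans (floor_eq_of_mem_rootTable hl₁ hm' h'))

theorem exists_coprime_of_nondegenerate (hl : 1.05 ≤ l) (h : Nondegenerate l) :
    ∃ a b : ℕ, Nat.Coprime a b ∧ a < b ∧ l ^ b - l ^ a = 1 := by
  by_contra! hcop
  obtain ⟨g, hg1, hg⟩ : ∃ g : ℕ, g ≠ 1 ∧
      ∀ A B : ℕ, A < B → l ^ B - l ^ A = 1 → g ∣ Nat.gcd A B := by
    by_cases hex : ∃ A B : ℕ, A < B ∧ l ^ B - l ^ A = 1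
    · obtain ⟨A₀, B₀, hAB₀, h₀⟩ := hex
      refine ⟨Nat.gcd A₀ B₀, fun h1 => hcop A₀ B₀ h1 hAB₀ h₀, fun A B hAB hsol => ?_⟩
      rw [gcd_eq_of_pow_sub_pow_eq_one hl hAB₀ h₀ (hcop A₀ B₀ · hAB₀ h₀) hAB hsol
        (hcop A B · hAB hsol)]
    · push Not at hex
      exact ⟨0, zero_ne_one, fun A B hAB hsol => absurd hsol (hex A B hAB)⟩
  exact not_nondegenerate_of_dvd_gcd (by linarith) hg hg1 h

end Numerics

/-- Classification of nondegenerate logarithmic lattices with spacing `λ ≥ 1.05`: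
nondegeneracy holds iff (i) `λ = 2`, or (ii) `λ = σ` the plastic number, or
(iii) `λ^b − λ^a = 1` for mutually prime `0 ≤ a < b ≤ 62` with `(a,b) ∉ {(1,3),(4,5)}`. -/
theorem nondegenerate_lattice_classification (l : ℝ) (hl : (1.05 : ℝ) ≤ l)
    (σ : ℝ) (hσ1 : 1 < σ) (hσ : σ ^ 3 - σ - 1 = 0) :
    Nondegenerate l ↔
      l = 2 ∨ l = σ ∨
        ∃ a b : ℕ, Nat.Coprime a b ∧ a < b ∧ b ≤ 62 ∧
          ¬(a = 1 ∧ b = 3) ∧ ¬(a = 4 ∧ b = 5) ∧ l ^ b - l ^ a = 1 := by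
  have hl₁ : 1 < l := by linarith
  constructor
  · intro hnd
    obtain ⟨a, b, hab, hlt, h⟩ := exists_coprime_of_nondegenerate hl hnd
    by_cases h13 : a = 1 ∧ b = 3
    · obtain ⟨rfl, rfl⟩ := h13
      exact .inr <| .inl <| eq_of_cube_sub_self_sub_one_eq_zero hl₁ hσ1 (by linear_combination h) hσ
    by_cases h45 : a = 4 ∧ b = 5
    · obtain ⟨rfl, rfl⟩ := h45
      exact .inr <| .inl <|
        eq_of_cube_sub_self_sub_one_eq_zero hl₁ hσ1 (cube_sub_self_sub_one_eq_zero_of_pow_five h) hσ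
    exact .inr <| .inr ⟨a, b, hab, hlt, le_62_of_pow_sub_pow_eq_one hl hlt h, h13, h45, h⟩
  · rintro (rfl | rfl | ⟨a, b, hab, -, -, -, -, h⟩)
    · exact nondegenerate_of_pow_sub_pow_eq_one two_ne_zero (a := 0) (b := 1) (by decide)
        (by norm_num)
    · exact nondegenerate_of_pow_sub_pow_eq_one (zero_lt_one.trans hl₁).ne' (a := 1) (b := 3)
        (by decide) (by linear_combination hσ)
    · exact nondegenerate_of_pow_sub_pow_eq_one (zero_lt_one.trans hl₁).ne' hab h
end

section
/- Let a, a′, b be integers with 0 ≤ a′ < a < b, and let x, y > 1 be real numbers with x^b − x^{a′} − 1 = 0 and y^b − y^a − 1 = 0. Then x < y. In other words, for fixed b, the unique root greater than 1 of the trinomial x^b − x^a − 1 is strictly increasing in a. -/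
/-! On `[1, ∞)` the map `t ↦ t ^ b - t ^ a = t ^ a (t ^ (b - a) - 1)` is a product of two
nonnegative monotone factors, hence monotone. If `y ≤ x`, then
`1 = y ^ b - y ^ a ≤ x ^ b - x ^ a < x ^ b - x ^ a' = 1`, since raising the lower exponent
strictly increases `x ^ a'` when `x > 1`. -/

open Set

theorem monotoneOn_pow_sub_pow {R : Type*} [CommRing R] [LinearOrder R] [IsStrictOrderedRing R]
    {a b : ℕ} (hab : a ≤ b) : MonotoneOn (fun t : R => t ^ b - t ^ a) (Ici 1) := by
  intro y (hy : 1 ≤ y) x (hx : 1 ≤ x) hyx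
  have factor : ∀ t : R, t ^ b - t ^ a = t ^ a * (t ^ (b - a) - 1) := fun t => by
    rw [mul_sub, mul_one, ← pow_add, Nat.add_sub_cancel' hab]
  simp only [factor]
  have hy0 : (0 : R) ≤ y := zero_le_one.trans hy
  exact mul_le_mul (pow_le_pow_left₀ hy0 hyx a)
    (sub_le_sub_right (pow_le_pow_left₀ hy0 hyx _) 1)
    (sub_nonneg.mpr (one_le_pow₀ hy)) (pow_nonneg (hy0.trans hyx) a)

/-- For fixed `b`, the unique root `> 1` of `x^b − x^a − 1` is strictly increasing in `a`:
if `0 ≤ a′ < a < b`, `x, y > 1`, `x^b − x^{a′} − 1 = 0` and `y^b − y^a − 1 = 0`, then `x < y`. -/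
theorem trinomial_root_monotone (a a' b : ℕ) (ha : a' < a) (hb : a < b)
    (x y : ℝ) (hx : 1 < x) (hy : 1 < y)
    (hxe : x ^ b - x ^ a' - 1 = 0) (hye : y ^ b - y ^ a - 1 = 0) :
    x < y := by
  by_contra! hyx
  have hmono : y ^ b - y ^ a ≤ x ^ b - x ^ a :=
    monotoneOn_pow_sub_pow hb.le (mem_Ici.mpr hy.le) (mem_Ici.mpr hx.le) hyx
  have hlower : x ^ a' < x ^ a := pow_lt_pow_right₀ hx ha
  linarith
end

section
/- Let a, b be integers with 0 ≤ a < b and b ≥ 63. If x > 1 is a real number satisfying x^b − x^a − 1 = 0, then x < 1.05. -/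
/-! If `x ≥ 1.05` were a root, then `x^(b-1) (x - 1) = x^b - x^(b-1) ≤ x^b - x^a = 1`, while
`x^(b-1) (x - 1)` is monotone in both `x ≥ 1` and the exponent, so it is at least
`1.05^62 · 0.05 > 1`. -/

section

variable {R : Type*} [Ring R] [LinearOrder R] [IsStrictOrderedRing R]

theorem pow_mul_sub_one_le_pow_mul_sub_one {c x : R} {m n : ℕ} (hc : 1 ≤ c) (hcx : c ≤ x)
    (hmn : m ≤ n) : c ^ m * (c - 1) ≤ x ^ n * (x - 1) := by
  have hx : 1 ≤ x := hc.trans hcx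
  calc c ^ m * (c - 1) ≤ x ^ m * (x - 1) :=
        mul_le_mul (pow_le_pow_left₀ (zero_le_one.trans hc) hcx m) (sub_le_sub_right hcx 1)
          (sub_nonneg.2 hc) (pow_nonneg (zero_le_one.trans hx) m)
    _ ≤ x ^ n * (x - 1) := mul_le_mul_of_nonneg_right (pow_le_pow_right₀ hx hmn) (sub_nonneg.2 hx)

theorem pow_pred_mul_sub_one_le_one_of_root {x : R} {a b : ℕ} (hx : 1 ≤ x) (hab : a < b)
    (heq : x ^ b - x ^ a - 1 = 0) : x ^ (b - 1) * (x - 1) ≤ 1 := by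
  have hpow : x ^ a ≤ x ^ (b - 1) := pow_le_pow_right₀ hx (Nat.le_pred_of_lt hab)
  have hsucc : x ^ (b - 1) * x = x ^ b := by rw [← pow_succ, Nat.sub_add_cancel hab.pos]
  calc x ^ (b - 1) * (x - 1) = x ^ b - x ^ (b - 1) := by rw [mul_sub, mul_one, hsucc]
    _ ≤ x ^ b - x ^ a := sub_le_sub_left hpow _
    _ = 1 := by rwa [sub_sub, sub_eq_zero, ← sub_eq_iff_eq_add'] at heq

end

theorem trinomial_root_lt_general (a b : ℕ) (hab : a < b) (hb : 63 ≤ b)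
    (x : ℝ) (heq : x ^ b - x ^ a - 1 = 0) :
    x < 1.05 := by
  by_contra! hx
  have hmono : (1.05 : ℝ) ^ 62 * (1.05 - 1) ≤ x ^ (b - 1) * (x - 1) :=
    pow_mul_sub_one_le_pow_mul_sub_one (by norm_num) hx (by omega)
  have hroot : x ^ (b - 1) * (x - 1) ≤ 1 :=
    pow_pred_mul_sub_one_le_one_of_root (by linarith) hab heq
  have hbig : (1 : ℝ) < 1.05 ^ 62 * (1.05 - 1) := by norm_num
  linarith

/-- For integers `0 ≤ a < b` with `b ≥ 63`, any root `x > 1` of `x^b − x^a − 1 = 0`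
satisfies `x < 1.05`. -/
theorem trinomial_root_lt (a b : ℕ) (hab : a < b) (hb : 63 ≤ b)
    (x : ℝ) (hx : 1 < x) (heq : x ^ b - x ^ a - 1 = 0) :
    x < 1.05 :=
  trinomial_root_lt_general a b hab hb x heq
end

section
/- Let Λ = {2^n : n ∈ ℤ} ∪ {−2^n : n ∈ ℤ} and let c₁, c₂, c₃ ∈ ℝ. For finitely supported functions f, g : Λ → ℂ define (f ∗ g)(k) = c₁ f(2k)g(−k) + c₂ f(−k)g(2k) + c₃ f(k/2)g(k/2). Suppose that ∗ is commutative, i.e. f ∗ g = g ∗ f for all finitely supported f, g, and associative in average, i.e. Σ_{k∈Λ} (f ∗ g)(k) · conj(h(k)) = Σ_{k∈Λ} f(k) · conj((g ∗ h)(k)) for all finitely supported f, g, h satisfying the reality condition. Then c₁ = c₂ = c₃. -/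
/-- The reality condition `f(−k) = conj(f(k))`. -/
def RealityCond (f : ℝ → ℂ) : Prop := ∀ k : ℝ, f (-k) = star (f k)

/-- The candidate product on the lattice `Λ(2)` with coefficients `c₁, c₂, c₃`:
`(f ∗ g)(k) = c₁ f(2k)g(−k) + c₂ f(−k)g(2k) + c₃ f(k/2)g(k/2)`. -/
noncomputable def prodTwo (c₁ c₂ c₃ : ℝ) (f g : ℝ → ℂ) (k : ℝ) : ℂ :=
  (c₁ : ℂ) * f (2 * k) * g (-k) + (c₂ : ℂ) * f (-k) * g (2 * k) +
    (c₃ : ℂ) * f (k / 2) * g (k / 2)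

/-!
Test associativity in average against the point masses `δ_a = symmDelta a` at `±a`; on such
functions every term of the product is an explicit coefficient. For `(f, g, h) = (δ₁, δ₂, δ₁)`
the two sides are `2 c₂` and `2 c₁`, and for `(δ₁, δ₁, δ₂)` they are `2 c₃` and `2 c₂`.
-/

open Function

theorem finsum_mem_eq_of_support_subset {α M : Type*} [AddCommMonoid M] {f : α → M}
    {s t : Set α} (hts : t ⊆ s) (hf : support f ⊆ t) :
    ∑ᶠ i ∈ s, f i = ∑ᶠ i ∈ t, f i :=
  finsum_mem_inter_support_eq' f s t fun _ hx => ⟨fun _ => hf hx, fun h => hts h⟩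

theorem neg_mem_logLattice {l x : ℝ} (hx : x ∈ logLattice l) : -x ∈ logLattice l := by
  obtain ⟨n, rfl | rfl⟩ := hx
  exacts [⟨n, Or.inr rfl⟩, ⟨n, Or.inl (neg_neg _)⟩]

noncomputable def symmDelta (a : ℝ) : ℝ → ℂ := Set.indicator {a, -a} 1

theorem support_symmDelta_subset (a : ℝ) : support (symmDelta a) ⊆ {a, -a} :=
  Set.support_indicator_subset

theorem finite_support_symmDelta (a : ℝ) : (support (symmDelta a)).Finite :=
  ((Set.finite_singleton _).insert a).subset (support_symmDelta_subset a)

theorem realityCond_symmDelta (a : ℝ) : RealityCond (symmDelta a) := by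
  intro k
  have hmem : -k ∈ ({a, -a} : Set ℝ) ↔ k ∈ ({a, -a} : Set ℝ) := by
    simp only [Set.mem_insert_iff, Set.mem_singleton_iff, neg_eq_iff_eq_neg, neg_neg, or_comm]
  by_cases hk : k ∈ ({a, -a} : Set ℝ) <;> simp [symmDelta, hk, hmem]

theorem star_symmDelta (a k : ℝ) : star (symmDelta a k) = symmDelta a k := by
  by_cases hk : k ∈ ({a, -a} : Set ℝ) <;> simp [symmDelta, hk]

theorem support_symmDelta_subset_of_mem {s : Set ℝ} {a : ℝ} (has : a ∈ s)
    (hneg : ∀ x ∈ s, -x ∈ s) : support (symmDelta a) ⊆ s :=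
  (support_symmDelta_subset a).trans (Set.pair_subset has (hneg a has))

theorem finsum_mem_mul_symmDelta {s : Set ℝ} {a : ℝ} (ha : a ≠ 0) (has : a ∈ s)
    (hneg : ∀ x ∈ s, -x ∈ s) (F : ℝ → ℂ) :
    ∑ᶠ k ∈ s, F k * symmDelta a k = F a + F (-a) := by
  have hsub : support (fun k => F k * symmDelta a k) ⊆ {a, -a} :=
    (support_mul_subset_right _ _).trans (support_symmDelta_subset a)
  rw [finsum_mem_eq_of_support_subset (Set.pair_subset has (hneg a has)) hsub,
    finsum_mem_pair (by simpa [eq_neg_iff_add_eq_zero, ← two_mul] using ha)]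
  simp [symmDelta]

def AssocInAverage (s : Set ℝ) (mul : (ℝ → ℂ) → (ℝ → ℂ) → ℝ → ℂ) : Prop :=
  ∀ f g h : ℝ → ℂ,
    (support f).Finite → (support g).Finite → (support h).Finite →
    support f ⊆ s → support g ⊆ s → support h ⊆ s →
    RealityCond f → RealityCond g → RealityCond h →
    ∑ᶠ k ∈ s, mul f g k * star (h k) = ∑ᶠ k ∈ s, f k * star (mul g h k)

theorem AssocInAverage.symmDelta_eq {s : Set ℝ} {mul : (ℝ → ℂ) → (ℝ → ℂ) → ℝ → ℂ}
    (H : AssocInAverage s mul) (hneg : ∀ x ∈ s, -x ∈ s) {a b c : ℝ} (ha : a ∈ s) (hb : b ∈ s)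
    (hc : c ∈ s) (ha0 : a ≠ 0) (hc0 : c ≠ 0) :
    mul (symmDelta a) (symmDelta b) c + mul (symmDelta a) (symmDelta b) (-c) =
      star (mul (symmDelta b) (symmDelta c) a) + star (mul (symmDelta b) (symmDelta c) (-a)) := by
  have h := H (symmDelta a) (symmDelta b) (symmDelta c) (finite_support_symmDelta a)
    (finite_support_symmDelta b) (finite_support_symmDelta c)
    (support_symmDelta_subset_of_mem ha hneg) (support_symmDelta_subset_of_mem hb hneg)
    (support_symmDelta_subset_of_mem hc hneg) (realityCond_symmDelta a)
    (realityCond_symmDelta b) (realityCond_symmDelta c)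
  simp_rw [star_symmDelta, mul_comm (symmDelta a _)] at h
  rwa [finsum_mem_mul_symmDelta hc0 hc hneg, finsum_mem_mul_symmDelta ha0 ha hneg] at h

theorem product_coefficients_equal_general (c₁ c₂ c₃ : ℝ)
    (hassoc : ∀ f g h : ℝ → ℂ,
      (Function.support f).Finite → (Function.support g).Finite →
      (Function.support h).Finite →
      Function.support f ⊆ logLattice 2 → Function.support g ⊆ logLattice 2 →
      Function.support h ⊆ logLattice 2 →
      RealityCond f → RealityCond g → RealityCond h →
      ∑ᶠ k ∈ logLattice 2, prodTwo c₁ c₂ c₃ f g k * star (h k) =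
        ∑ᶠ k ∈ logLattice 2, f k * star (prodTwo c₁ c₂ c₃ g h k)) :
    c₁ = c₂ ∧ c₂ = c₃ := by
  have H : AssocInAverage (logLattice 2) (prodTwo c₁ c₂ c₃) := hassoc
  have one_mem : (1 : ℝ) ∈ logLattice 2 := ⟨0, by norm_num⟩
  have two_mem : (2 : ℝ) ∈ logLattice 2 := ⟨1, by norm_num⟩
  have hneg : ∀ x ∈ logLattice 2, -x ∈ logLattice 2 := fun _ => neg_mem_logLattice
  have e₁ := H.symmDelta_eq hneg one_mem two_mem one_mem one_ne_zero one_ne_zero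
  have e₂ := H.symmDelta_eq hneg one_mem one_mem two_mem one_ne_zero two_ne_zero
  norm_num [prodTwo, symmDelta, ← two_mul] at e₁ e₂
  exact ⟨e₁.symm, e₂.symm⟩

/-- If the product `prodTwo c₁ c₂ c₃` on the lattice `Λ(2)` is commutative and
associative in average, then `c₁ = c₂ = c₃`. -/
theorem product_coefficients_equal (c₁ c₂ c₃ : ℝ)
    (hcomm : ∀ f g : ℝ → ℂ,
      (Function.support f).Finite → (Function.support g).Finite →
      Function.support f ⊆ logLattice 2 → Function.support g ⊆ logLattice 2 →
      prodTwo c₁ c₂ c₃ f g = prodTwo c₁ c₂ c₃ g f)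
    (hassoc : ∀ f g h : ℝ → ℂ,
      (Function.support f).Finite → (Function.support g).Finite →
      (Function.support h).Finite →
      Function.support f ⊆ logLattice 2 → Function.support g ⊆ logLattice 2 →
      Function.support h ⊆ logLattice 2 →
      RealityCond f → RealityCond g → RealityCond h →
      ∑ᶠ k ∈ logLattice 2, prodTwo c₁ c₂ c₃ f g k * star (h k) =
        ∑ᶠ k ∈ logLattice 2, f k * star (prodTwo c₁ c₂ c₃ g h k)) :
    c₁ = c₂ ∧ c₂ = c₃ :=
  product_coefficients_equal_general c₁ c₂ c₃ hassoc
end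

section
/- Let φ = (1+√5)/2 and Λ = Λ(φ). The convolution product (f ∗ g)(k) = Σ_{p,q ∈ Λ, p+q=k} f(p)g(q) on finitely supported functions Λ → ℂ is not associative: for p = φ⁴, q = −φ³, r = −φ, and δ_x the indicator function of the point x ∈ Λ, one has (δ_p ∗ δ_q) ∗ δ_r = δ_1 whereas δ_p ∗ (δ_q ∗ δ_r) = 0. In particular there exist finitely supported f, g, h : Λ → ℂ with (f ∗ g) ∗ h ≠ f ∗ (g ∗ h). -/
open scoped Classical

/-- The convolution product on a lattice `Λ ⊆ ℝ`:
`(f ∗ g)(k) = Σ_{p,q ∈ Λ, p+q=k} f(p) g(q)`. -/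
noncomputable def latticeConv (Λ : Set ℝ) (f g : ℝ → ℂ) (k : ℝ) : ℂ :=
  ∑ᶠ p ∈ Λ, ∑ᶠ q ∈ Λ, if p + q = k then f p * g q else 0

/-- The delta function at a point `x`. -/
noncomputable def deltaFn (x : ℝ) : ℝ → ℂ := fun k => if k = x then 1 else 0

/-!
The convolution of two deltas at lattice points `a, b` is the delta at `a + b`, even when `a + b`
lies off the lattice; but a delta at a point off the lattice is invisible to a further convolution,
which only samples the lattice. With `φ² = φ + 1`, the left bracket passes through the lattice
points `φ⁴ − φ³ = φ²` and `φ² − φ = 1`, while the right bracket passes through `−(φ³ + φ)`, which is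
off the lattice because `φ³ < φ³ + φ < φ³ + φ² = φ⁴`.
-/

lemma finsum_mem_eq_single {α M : Type*} [AddCommMonoid M] {s : Set α} {f : α → M} {a : α}
    (ha : a ∈ s) (h : ∀ x ∈ s, x ≠ a → f x = 0) : ∑ᶠ x ∈ s, f x = f a := by
  rw [finsum_mem_def, finsum_eq_single _ a, Set.indicator_of_mem ha]
  intro x hx
  by_cases hxs : x ∈ s
  · rw [Set.indicator_of_mem hxs, h x hxs hx]
  · exact Set.indicator_of_notMem hxs _

section Delta

lemma support_deltaFn (x : ℝ) : Function.support (deltaFn x) = {x} := by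
  ext k
  simp [deltaFn]

lemma deltaFn_ne_zero (x : ℝ) : deltaFn x ≠ 0 := fun h => by
  simpa [deltaFn] using congrFun h x

variable {Λ : Set ℝ}

lemma latticeConv_deltaFn_deltaFn {a b : ℝ} (ha : a ∈ Λ) (hb : b ∈ Λ) :
    latticeConv Λ (deltaFn a) (deltaFn b) = deltaFn (a + b) := by
  funext k
  rw [latticeConv, finsum_mem_eq_single ha, finsum_mem_eq_single hb]
  · by_cases hk : k = a + b <;> simp [deltaFn, hk, eq_comm (a := a + b)]
  · intro q _ hq
    simp [deltaFn, hq]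
  · intro p _ hp
    exact finsum_mem_eq_zero_of_forall_eq_zero fun q _ => by simp [deltaFn, hp]

lemma latticeConv_deltaFn_of_notMem (f : ℝ → ℂ) {x : ℝ} (hx : x ∉ Λ) :
    latticeConv Λ f (deltaFn x) = 0 := by
  funext k
  refine finsum_mem_eq_zero_of_forall_eq_zero fun p _ =>
    finsum_mem_eq_zero_of_forall_eq_zero fun q hq => ?_
  have hqx : q ≠ x := fun h => hx (h ▸ hq)
  simp [deltaFn, hqx]

end Delta

section LogLattice

lemma pow_mem_logLattice (l : ℝ) (n : ℕ) : l ^ n ∈ logLattice l :=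
  ⟨n, Or.inl (zpow_natCast l n).symm⟩

lemma neg_pow_mem_logLattice (l : ℝ) (n : ℕ) : -(l ^ n) ∈ logLattice l :=
  ⟨n, Or.inr (by rw [zpow_natCast])⟩

lemma notMem_logLattice_of_zpow_lt_abs {l x : ℝ} (hl : 1 < l) (n : ℤ)
    (hlo : l ^ n < |x|) (hhi : |x| < l ^ (n + 1)) : x ∉ logLattice l := by
  rintro ⟨m, rfl | rfl⟩ <;>
  · simp only [abs_neg, abs_of_pos (zpow_pos (zero_lt_one.trans hl) m)] at hlo hhi
    have := (zpow_lt_zpow_iff_right₀ hl).mp hlo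
    have := (zpow_lt_zpow_iff_right₀ hl).mp hhi
    omega

end LogLattice

open Real

lemma neg_goldenRatio_pow_three_add_neg_goldenRatio_notMem_logLattice :
    -(goldenRatio ^ 3) + -goldenRatio ∉ logLattice goldenRatio := by
  have hpos := goldenRatio_pos
  have hcube : 0 < goldenRatio ^ 3 := pow_pos hpos 3
  have hfour : goldenRatio ^ 4 = goldenRatio ^ 3 + goldenRatio + 1 := by
    linear_combination goldenRatio_pow_sub_goldenRatio_pow 2 + goldenRatio_sq
  refine notMem_logLattice_of_zpow_lt_abs one_lt_goldenRatio (3 : ℕ) ?_ ?_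
  · rw [abs_of_neg (by linarith), zpow_natCast]
    linarith
  · rw [abs_of_neg (by linarith), ← Nat.cast_succ, zpow_natCast]
    linarith

/-- The convolution product on the golden-mean lattice is not associative:
with `p = φ⁴`, `q = −φ³`, `r = −φ` one has `(δ_p ∗ δ_q) ∗ δ_r = δ_1` while
`δ_p ∗ (δ_q ∗ δ_r) = 0`; in particular there exist finitely supported
`f, g, h` supported on the lattice with `(f ∗ g) ∗ h ≠ f ∗ (g ∗ h)`. -/
theorem conv_not_associative (φ : ℝ) (hφ : φ = (1 + Real.sqrt 5) / 2) :
    (latticeConv (logLattice φ) (latticeConv (logLattice φ) (deltaFn (φ ^ 4)) (deltaFn (-(φ ^ 3)))) (deltaFn (-φ))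
        = deltaFn 1) ∧
    (latticeConv (logLattice φ) (deltaFn (φ ^ 4)) (latticeConv (logLattice φ) (deltaFn (-(φ ^ 3))) (deltaFn (-φ)))
        = 0) ∧
    ∃ f g h : ℝ → ℂ,
      (Function.support f).Finite ∧ (Function.support g).Finite ∧
      (Function.support h).Finite ∧
      Function.support f ⊆ logLattice φ ∧ Function.support g ⊆ logLattice φ ∧
      Function.support h ⊆ logLattice φ ∧
      latticeConv (logLattice φ) (latticeConv (logLattice φ) f g) h ≠
        latticeConv (logLattice φ) f (latticeConv (logLattice φ) g h) := by
  obtain rfl : φ = goldenRatio := hφ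
  have hp := pow_mem_logLattice goldenRatio 4
  have hq := neg_pow_mem_logLattice goldenRatio 3
  have hr : -goldenRatio ∈ logLattice goldenRatio := by
    simpa using neg_pow_mem_logLattice goldenRatio 1
  have hpq : goldenRatio ^ 4 + -(goldenRatio ^ 3) = goldenRatio ^ 2 := by
    linear_combination goldenRatio_pow_sub_goldenRatio_pow 2
  have hpqr : goldenRatio ^ 2 + -goldenRatio = 1 := by linear_combination goldenRatio_sq
  set Λ := logLattice goldenRatio
  have left : latticeConv Λ (latticeConv Λ (deltaFn (goldenRatio ^ 4))
      (deltaFn (-(goldenRatio ^ 3)))) (deltaFn (-goldenRatio)) = deltaFn 1 := by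
    rw [latticeConv_deltaFn_deltaFn hp hq, hpq,
      latticeConv_deltaFn_deltaFn (pow_mem_logLattice _ 2) hr, hpqr]
  have right : latticeConv Λ (deltaFn (goldenRatio ^ 4))
      (latticeConv Λ (deltaFn (-(goldenRatio ^ 3))) (deltaFn (-goldenRatio))) = 0 := by
    rw [latticeConv_deltaFn_deltaFn hq hr]
    exact latticeConv_deltaFn_of_notMem _
      neg_goldenRatio_pow_three_add_neg_goldenRatio_notMem_logLattice
  refine ⟨left, right, _, _, _, ?_, ?_, ?_, ?_, ?_, ?_, left ▸ right ▸ deltaFn_ne_zero 1⟩ <;>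
    simp [support_deltaFn, hp, hq, hr]
end

section
/- Let φ = (1+√5)/2 and Λ = Λ(φ), and let m ≥ 1 be an integer. There exists a constant C > 0 (independent of f and g) such that for all finitely supported f, g : Λ → ℂ, ‖f ∗ g‖_{h^m} ≤ C·( ‖f‖_{h^m}·‖g‖_{ℓ^∞} + ‖Df‖_{ℓ^∞}·‖g‖_{h^{m−1}} ), where ∗ is the convolution on Λ, ‖f‖_{h^m} = ( Σ_{k∈Λ} |k|^{2m} |f(k)|² )^{1/2}, ‖g‖_{ℓ^∞} = sup_{k∈Λ} |g(k)|, and ‖Df‖_{ℓ^∞} = sup_{k∈Λ} |k|·|f(k)|. -/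
open scoped Classical

/-- The homogeneous Sobolev norm `‖f‖_{h^m} = (Σ_{k∈Λ} |k|^{2m} |f(k)|²)^{1/2}`. -/
noncomputable def hNorm (Λ : Set ℝ) (m : ℕ) (f : ℝ → ℂ) : ℝ :=
  Real.sqrt (∑ᶠ k ∈ Λ, |k| ^ (2 * m) * ‖f k‖ ^ 2)

/-- The `ℓ^∞` norm `‖f‖_{ℓ^∞} = sup_{k∈Λ} |f(k)|`. -/
noncomputable def linfNorm (Λ : Set ℝ) (f : ℝ → ℂ) : ℝ := ⨆ k ∈ Λ, ‖f k‖

/-- The `ℓ^∞` norm of `Df`: `‖Df‖_{ℓ^∞} = sup_{k∈Λ} |k| |f(k)|`. -/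
noncomputable def DlinfNorm (Λ : Set ℝ) (f : ℝ → ℂ) : ℝ := ⨆ k ∈ Λ, |k| * ‖f k‖

/-!
If `p`, `q` and `p + q` all lie in `Λ(φ)`, their absolute values are three consecutive powers
`φ ^ (c - 2)`, `φ ^ (c - 1)`, `φ ^ c`: dividing out, the only solutions of `φ ^ i + φ ^ j = 1` are
`{i, j} = {-1, -2}`. So in every interacting triad `|k| ≤ φ ^ 2 |p|`, and each lattice point
interacts with at most `8` others. Bounding `|k| ^ m |(f ∗ g)(k)|` by `φ ^ (2m) ‖g‖_∞` times a
sum of `|p| ^ m |f(p)|` over those neighbours, Schur's test gives the stronger estimate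
`‖f ∗ g‖_{h^m} ≤ 8 φ ^ (2m) ‖f‖_{h^m} ‖g‖_{ℓ^∞}`; the second term of the claim is nonnegative.
-/

open Real Function Finset

/-- Schur's test for a `0`–`1` kernel whose rows and columns have at most `N` entries. -/
theorem Finset.sum_sq_sum_filter_le {ι κ : Type*} (s : Finset ι) (t : Finset κ)
    (r : ι → κ → Prop) (x : κ → ℝ) (N : ℕ)
    (hrow : ∀ i ∈ s, #{j ∈ t | r i j} ≤ N) (hcol : ∀ j ∈ t, #{i ∈ s | r i j} ≤ N) :
    ∑ i ∈ s, (∑ j ∈ t with r i j, x j) ^ 2 ≤ N ^ 2 * ∑ j ∈ t, x j ^ 2 := by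
  calc ∑ i ∈ s, (∑ j ∈ t with r i j, x j) ^ 2
      ≤ ∑ i ∈ s, N * ∑ j ∈ t with r i j, x j ^ 2 := by
        gcongr with i hi
        exact sq_sum_le_card_mul_sum_sq.trans <| mul_le_mul_of_nonneg_right
          (by exact_mod_cast hrow i hi) (sum_nonneg fun j _ => sq_nonneg _)
    _ = N * ∑ j ∈ t, #{i ∈ s | r i j} * x j ^ 2 := by
        rw [← mul_sum]
        simp only [sum_filter]
        rw [sum_comm]
        refine congrArg _ (sum_congr rfl fun j _ => ?_)
        rw [← sum_filter, sum_const, nsmul_eq_mul]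
    _ ≤ N * ∑ j ∈ t, N * x j ^ 2 := by
        gcongr with j hj
        exact_mod_cast hcol j hj
    _ = N ^ 2 * ∑ j ∈ t, x j ^ 2 := by rw [← mul_sum]; ring

lemma Finset.card_le_of_coe_subset_of_encard_le {α : Type*} {s : Finset α} {t : Set α} {N : ℕ}
    (ht : t.encard ≤ N) (hst : ↑s ⊆ t) : #s ≤ N := by
  have := (Set.encard_le_encard hst).trans ht
  rwa [Set.encard_coe_eq_coe_finsetCard, Nat.cast_le] at this

section LatticeAnalysis

variable {Λ : Set ℝ} {f g : ℝ → ℂ}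

lemma latticeConv_apply (k : ℝ) :
    latticeConv Λ f g k = ∑ᶠ p ∈ Λ, if k - p ∈ Λ then f p * g (k - p) else 0 := by
  refine finsum_mem_congr rfl fun p _ => ?_
  rw [finsum_mem_def, finsum_eq_single _ (k - p)]
  · by_cases h : k - p ∈ Λ <;> simp [h]
  · intro q hq
    have : p + q ≠ k := fun h => hq (by linarith)
    simp [Set.indicator_apply, this]

lemma latticeConv_eq_sum (hf : (support f).Finite) (hfΛ : support f ⊆ Λ) (k : ℝ) :
    latticeConv Λ f g k = ∑ p ∈ hf.toFinset with k - p ∈ Λ, f p * g (k - p) := by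
  rw [latticeConv_apply, sum_filter]
  refine finsum_mem_eq_sum_of_subset _ ?_ fun p hp => hfΛ (hf.mem_toFinset.1 hp)
  rintro p ⟨-, hp⟩
  refine hf.mem_toFinset.2 fun hfp => hp ?_
  simp [hfp]

lemma hNorm_sq_eq_sum {m : ℕ} {t : Finset ℝ} (ht : ↑t ⊆ Λ) (hf : Λ ∩ support f ⊆ t) :
    hNorm Λ m f ^ 2 = ∑ k ∈ t, |k| ^ (2 * m) * ‖f k‖ ^ 2 := by
  have hsupp : Λ ∩ support (fun k => |k| ^ (2 * m) * ‖f k‖ ^ 2) ⊆ t :=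
    fun k ⟨hk, hk'⟩ => hf ⟨hk, fun h => hk' (by simp [h])⟩
  rw [hNorm, finsum_mem_eq_sum_of_subset _ hsupp ht,
    sq_sqrt (sum_nonneg fun k _ => by positivity)]

lemma linfNorm_nonneg : 0 ≤ linfNorm Λ g :=
  Real.iSup_nonneg fun _ => Real.iSup_nonneg fun _ => norm_nonneg _

lemma DlinfNorm_nonneg : 0 ≤ DlinfNorm Λ f :=
  Real.iSup_nonneg fun _ => Real.iSup_nonneg fun _ => by positivity

lemma norm_le_linfNorm (hg : BddAbove (Set.range fun k => ‖g k‖)) {k : ℝ} (hk : k ∈ Λ) :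
    ‖g k‖ ≤ linfNorm Λ g :=
  le_ciSup₂ (f := fun k (_ : k ∈ Λ) => ‖g k‖)
    (hg.mono (Set.iUnion_subset fun k => Set.range_subset_iff.2 fun _ => Set.mem_range_self k)) k hk

lemma bddAbove_range_norm_of_finite_support (hg : (support g).Finite) :
    BddAbove (Set.range fun k => ‖g k‖) := by
  refine ((hg.image fun k => ‖g k‖).insert 0).bddAbove.mono ?_
  rintro _ ⟨k, rfl⟩
  by_cases h : g k = 0
  · simp [h]
  · exact Set.mem_insert_of_mem _ (Set.mem_image_of_mem _ h)

open Pointwise in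
lemma support_latticeConv_subset (hf : (support f).Finite) (hg : (support g).Finite)
    (hfΛ : support f ⊆ Λ) : support (latticeConv Λ f g) ⊆ ↑(hf.toFinset + hg.toFinset) := by
  intro k hk
  rw [mem_support, latticeConv_eq_sum hf hfΛ] at hk
  obtain ⟨p, hp, hne⟩ := exists_ne_zero_of_sum_ne_zero hk
  obtain ⟨hfp, hgp⟩ := mul_ne_zero_iff.1 hne
  exact Finset.mem_add.2
    ⟨p, (mem_filter.1 hp).1, k - p, hg.mem_toFinset.2 hgp, add_sub_cancel p k⟩

open Pointwise in
theorem hNorm_latticeConv_le {m N : ℕ} {R : ℝ} (hR : 0 ≤ R)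
    (hratio : ∀ p ∈ Λ, ∀ k ∈ Λ, k - p ∈ Λ → |k| ≤ R * |p|)
    (hrow : ∀ k ∈ Λ, {p ∈ Λ | k - p ∈ Λ}.encard ≤ N)
    (hcol : ∀ p ∈ Λ, {k ∈ Λ | k - p ∈ Λ}.encard ≤ N)
    (hf : (support f).Finite) (hg : (support g).Finite) (hfΛ : support f ⊆ Λ) :
    hNorm Λ m (latticeConv Λ f g) ≤ N * R ^ m * (hNorm Λ m f * linfNorm Λ g) := by
  set T := hf.toFinset
  set W := {k ∈ T + hg.toFinset | k ∈ Λ}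
  set B := linfNorm Λ g
  have hTΛ : ∀ p ∈ T, p ∈ Λ := fun p hp => hfΛ (hf.mem_toFinset.1 hp)
  have hWΛ : ∀ k ∈ W, k ∈ Λ := fun k hk => (mem_filter.1 hk).2
  have hconv : ∀ k ∈ W, |k| ^ m * ‖latticeConv Λ f g k‖ ≤
      R ^ m * B * ∑ p ∈ T with k - p ∈ Λ, |p| ^ m * ‖f p‖ := by
    intro k hk
    rw [latticeConv_eq_sum hf hfΛ, mul_sum]
    refine (mul_le_mul_of_nonneg_left (norm_sum_le _ _) (by positivity)).trans ?_
    rw [mul_sum]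
    refine sum_le_sum fun p hp => ?_
    obtain ⟨hpT, hkp⟩ := mem_filter.1 hp
    have hg_le : ‖g (k - p)‖ ≤ B :=
      norm_le_linfNorm (bddAbove_range_norm_of_finite_support hg) hkp
    calc |k| ^ m * ‖f p * g (k - p)‖ ≤ (R * |p|) ^ m * (‖f p‖ * B) := by
          rw [norm_mul]
          gcongr
          exact hratio p (hTΛ p hpT) k (hWΛ k hk) hkp
      _ = R ^ m * B * (|p| ^ m * ‖f p‖) := by ring
  have hschur := sum_sq_sum_filter_le W T (fun k p => k - p ∈ Λ) (fun p => |p| ^ m * ‖f p‖) N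
    (fun k hk => card_le_of_coe_subset_of_encard_le (hrow k (hWΛ k hk))
      fun p hp => ⟨hTΛ p (mem_filter.1 hp).1, (mem_filter.1 hp).2⟩)
    (fun p hp => card_le_of_coe_subset_of_encard_le (hcol p (hTΛ p hp))
      fun k hk => ⟨hWΛ k (mem_filter.1 hk).1, (mem_filter.1 hk).2⟩)
  have hWsupp : Λ ∩ support (latticeConv Λ f g) ⊆ W := fun k ⟨hkΛ, hk⟩ =>
    mem_filter.2 ⟨support_latticeConv_subset hf hg hfΛ hk, hkΛ⟩
  have hB : 0 ≤ B := linfNorm_nonneg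
  have hsq : ∀ x y : ℝ, (|x| ^ m * y) ^ 2 = |x| ^ (2 * m) * y ^ 2 := fun x y => by ring
  refine (pow_le_pow_iff_left₀ (Real.sqrt_nonneg _) (mul_nonneg (mul_nonneg (Nat.cast_nonneg _)
    (pow_nonneg hR _)) (mul_nonneg (Real.sqrt_nonneg _) hB)) two_ne_zero).1 ?_
  calc hNorm Λ m (latticeConv Λ f g) ^ 2
      = ∑ k ∈ W, (|k| ^ m * ‖latticeConv Λ f g k‖) ^ 2 := by
        simp only [hNorm_sq_eq_sum (fun k hk => hWΛ k hk) hWsupp, hsq]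
    _ ≤ ∑ k ∈ W, (R ^ m * B * ∑ p ∈ T with k - p ∈ Λ, |p| ^ m * ‖f p‖) ^ 2 :=
        sum_le_sum fun k hk => pow_le_pow_left₀ (by positivity) (hconv k hk) 2
    _ = (R ^ m * B) ^ 2 * ∑ k ∈ W, (∑ p ∈ T with k - p ∈ Λ, |p| ^ m * ‖f p‖) ^ 2 := by
        rw [mul_sum]
        exact sum_congr rfl fun k _ => by ring
    _ ≤ (R ^ m * B) ^ 2 * (N ^ 2 * ∑ p ∈ T, (|p| ^ m * ‖f p‖) ^ 2) := by gcongr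
    _ = (N * R ^ m * (hNorm Λ m f * B)) ^ 2 := by
        rw [show (N * R ^ m * (hNorm Λ m f * B)) ^ 2 = (R ^ m * B) ^ 2 * (N ^ 2 * hNorm Λ m f ^ 2)
          by ring, hNorm_sq_eq_sum (fun p hp => hTΛ p hp) fun p hp => hf.mem_toFinset.2 hp.2]
        simp only [hsq]

end LatticeAnalysis

lemma mem_logLattice_iff {l x : ℝ} (hl : 0 ≤ l) : x ∈ logLattice l ↔ ∃ n : ℤ, |x| = l ^ n :=
  exists_congr fun n => (abs_eq (zpow_nonneg hl n)).symm

lemma sub_mem_logLattice_comm {l x y : ℝ} (hl : 0 ≤ l) :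
    x - y ∈ logLattice l ↔ y - x ∈ logLattice l := by
  simp only [mem_logLattice_iff hl, abs_sub_comm]

lemma abs_add_abs_eq_abs_of_add_eq {x y z : ℝ} (h : x + y = z) :
    |x| + |y| = |z| ∨ |x| + |z| = |y| ∨ |y| + |z| = |x| := by
  rcases abs_cases x with ⟨hx, _⟩ | ⟨hx, _⟩ <;> rcases abs_cases y with ⟨hy, _⟩ | ⟨hy, _⟩ <;>
    rcases abs_cases z with ⟨hz, _⟩ | ⟨hz, _⟩ <;> rw [hx, hy, hz] <;>
    first | (left; linarith) | (right; left; linarith) | (right; right; linarith)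

section GoldenLattice

open scoped goldenRatio

lemma goldenRatio_zpow_neg_one : φ ^ (-1 : ℤ) = φ - 1 := by
  rw [zpow_neg_one]
  exact inv_eq_of_mul_eq_one_right (by linear_combination goldenRatio_sq)

lemma goldenRatio_zpow_neg_two : φ ^ (-2 : ℤ) = 2 - φ := by
  rw [zpow_neg, zpow_two]
  exact inv_eq_of_mul_eq_one_right (by linear_combination (1 - φ) * goldenRatio_sq)

lemma goldenRatio_zpow_add_zpow_eq_one {i j : ℤ} (h : φ ^ i + φ ^ j = 1) :
    (i = -1 ∧ j = -2) ∨ (i = -2 ∧ j = -1) := by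
  have hφ : 1 < φ := one_lt_goldenRatio
  have hi : i < 0 := (zpow_lt_one_iff_right₀ hφ).mp (by linarith [zpow_pos goldenRatio_pos j])
  have hj : j < 0 := (zpow_lt_one_iff_right₀ hφ).mp (by linarith [zpow_pos goldenRatio_pos i])
  have hsum : φ ^ (-1 : ℤ) + φ ^ (-2 : ℤ) = 1 := by
    rw [goldenRatio_zpow_neg_one, goldenRatio_zpow_neg_two]; ring
  have hinj := zpow_right_injective₀ goldenRatio_pos hφ.ne'
  have small : ∀ n : ℤ, n ≤ -2 → φ ^ n ≤ 2 - φ := fun n hn =>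
    (zpow_le_zpow_right₀ hφ.le hn).trans_eq goldenRatio_zpow_neg_two
  rcases (by omega : i = -1 ∨ i ≤ -2) with rfl | hi2
  · exact .inl ⟨rfl, hinj (by simp only; linarith)⟩
  rcases (by omega : j = -1 ∨ j ≤ -2) with rfl | hj2
  · exact .inr ⟨hinj (by simp only; linarith), rfl⟩
  have : (3 / 2 : ℝ) < φ := by
    have : (2 : ℝ) < √5 := by
      rw [show (2 : ℝ) = √(2 ^ 2) by simp]; exact Real.sqrt_lt_sqrt (by norm_num) (by norm_num)
    rw [goldenRatio]; linarith
  linarith [small i hi2, small j hj2]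

lemma goldenRatio_zpow_add_zpow_eq_zpow {a b c : ℤ} (h : φ ^ a + φ ^ b = φ ^ c) :
    (a = c - 1 ∧ b = c - 2) ∨ (a = c - 2 ∧ b = c - 1) := by
  have h1 : φ ^ (a - c) + φ ^ (b - c) = 1 := by
    simp only [zpow_sub₀ goldenRatio_ne_zero, ← add_div, h]
    exact div_self (zpow_ne_zero c goldenRatio_ne_zero)
  rcases goldenRatio_zpow_add_zpow_eq_one h1 with ⟨_, _⟩ | ⟨_, _⟩ <;> omega

lemma abs_add_eq_abs_mul_goldenRatio_zpow {x y : ℝ} (hx : x ∈ logLattice φ)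
    (hy : y ∈ logLattice φ) (hxy : x + y ∈ logLattice φ) :
    ∃ j ∈ ({-2, -1, 1, 2} : Finset ℤ), |x + y| = |x| * φ ^ j := by
  obtain ⟨a, ha⟩ := (mem_logLattice_iff goldenRatio_pos.le).1 hx
  obtain ⟨b, hb⟩ := (mem_logLattice_iff goldenRatio_pos.le).1 hy
  obtain ⟨c, hc⟩ := (mem_logLattice_iff goldenRatio_pos.le).1 hxy
  refine ⟨c - a, ?_, by rw [hc, ha, ← zpow_add₀ goldenRatio_ne_zero, add_sub_cancel]⟩
  rcases abs_add_abs_eq_abs_of_add_eq (rfl : x + y = x + y) with h | h | h <;>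
    rw [ha, hb, hc] at h <;>
    rcases goldenRatio_zpow_add_zpow_eq_zpow h with ⟨_, _⟩ | ⟨_, _⟩ <;>
    simp only [Finset.mem_insert, Finset.mem_singleton] <;> omega

lemma abs_le_goldenRatio_sq_mul_abs {p k : ℝ} (hp : p ∈ logLattice φ) (hk : k ∈ logLattice φ)
    (hkp : k - p ∈ logLattice φ) : |k| ≤ φ ^ 2 * |p| := by
  obtain ⟨j, hj, h⟩ := abs_add_eq_abs_mul_goldenRatio_zpow hp hkp (by rwa [add_sub_cancel])
  rw [add_sub_cancel] at h
  rw [h, mul_comm, ← zpow_natCast]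
  gcongr
  · exact one_lt_goldenRatio.le
  · simp only [Finset.mem_insert, Finset.mem_singleton] at hj
    omega

lemma encard_setOf_sub_mem_logLattice_goldenRatio_le {p : ℝ} (hp : p ∈ logLattice φ) :
    {k ∈ logLattice φ | k - p ∈ logLattice φ}.encard ≤ 8 := by
  let J : Finset (ℤ × ℤ) := {-2, -1, 1, 2} ×ˢ {1, -1}
  have hsub : {k ∈ logLattice φ | k - p ∈ logLattice φ} ⊆
      ↑(J.image fun js => js.2 * (|p| * φ ^ js.1)) := by
    rintro k ⟨hk, hkp⟩
    obtain ⟨j, hj, h⟩ := abs_add_eq_abs_mul_goldenRatio_zpow hp hkp (by rwa [add_sub_cancel])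
    rw [add_sub_cancel] at h
    simp only [coe_image, Set.mem_image, mem_coe, J, mem_product]
    rcases abs_choice k with hs | hs
    · exact ⟨(j, 1), ⟨hj, by simp⟩, by simp [← h, hs]⟩
    · exact ⟨(j, -1), ⟨hj, by simp⟩, by simp [← h, hs]⟩
  calc _ ≤ _ := Set.encard_le_encard hsub
    _ ≤ (8 : ℕ) := by
        rw [Set.encard_coe_eq_coe_finsetCard, Nat.cast_le]
        exact card_image_le.trans (by decide)
    _ = 8 := rfl

end GoldenLattice

theorem calculus_inequality_general (φ : ℝ) (hφ : φ = (1 + Real.sqrt 5) / 2)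
    (m : ℕ) :
    ∃ C : ℝ, 0 < C ∧ ∀ f g : ℝ → ℂ,
      (Function.support f).Finite → (Function.support g).Finite →
      Function.support f ⊆ logLattice φ → Function.support g ⊆ logLattice φ →
      hNorm (logLattice φ) m (latticeConv (logLattice φ) f g) ≤
        C * (hNorm (logLattice φ) m f * linfNorm (logLattice φ) g +
          DlinfNorm (logLattice φ) f * hNorm (logLattice φ) (m - 1) g) := by
  obtain rfl : φ = goldenRatio := hφ
  refine ⟨8 * goldenRatio ^ (2 * m), by positivity, fun f g hf hg hfΛ _ => ?_⟩
  have hcol (p : ℝ) (hp : p ∈ logLattice goldenRatio) :=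
    encard_setOf_sub_mem_logLattice_goldenRatio_le hp
  have hrow (k : ℝ) (hk : k ∈ logLattice goldenRatio) :
      {p ∈ logLattice goldenRatio | k - p ∈ logLattice goldenRatio}.encard ≤ 8 := by
    rw [← Set.sep_ext_iff.2 fun p _ => sub_mem_logLattice_comm goldenRatio_pos.le]
    exact hcol k hk
  calc _ ≤ (8 : ℕ) * (goldenRatio ^ 2) ^ m *
        (hNorm (logLattice goldenRatio) m f * linfNorm (logLattice goldenRatio) g) :=
        hNorm_latticeConv_le (by positivity) (fun p hp k hk => abs_le_goldenRatio_sq_mul_abs hp hk)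
          hrow hcol hf hg hfΛ
    _ ≤ _ := by
        rw [← pow_mul, Nat.cast_ofNat]
        gcongr
        exact le_add_of_nonneg_right (mul_nonneg DlinfNorm_nonneg (Real.sqrt_nonneg _))

/-- Calculus inequality on the golden-mean lattice: for every `m ≥ 1` there is a
constant `C > 0` with
`‖f ∗ g‖_{h^m} ≤ C (‖f‖_{h^m} ‖g‖_{ℓ^∞} + ‖Df‖_{ℓ^∞} ‖g‖_{h^{m−1}})`
for all finitely supported `f, g` supported on the lattice. -/
theorem calculus_inequality (φ : ℝ) (hφ : φ = (1 + Real.sqrt 5) / 2)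
    (m : ℕ) (hm : 1 ≤ m) :
    ∃ C : ℝ, 0 < C ∧ ∀ f g : ℝ → ℂ,
      (Function.support f).Finite → (Function.support g).Finite →
      Function.support f ⊆ logLattice φ → Function.support g ⊆ logLattice φ →
      hNorm (logLattice φ) m (latticeConv (logLattice φ) f g) ≤
        C * (hNorm (logLattice φ) m f * linfNorm (logLattice φ) g +
          DlinfNorm (logLattice φ) f * hNorm (logLattice φ) (m - 1) g) :=
  calculus_inequality_general φ hφ m
end
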